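/- Assume GCH (or just that a ◊-sequence exists on S³₁ = {γ < ω₃ : cf γ = ω₁}). Then there exists a stationary set A ⊆ S³₁ such that for every S ⊆ S³₀ = {α < ω₃ : cf α = ω}, the symmetric difference A Δ (Tr(S) ∩ S³₁) is stationary, where Tr(S) = {γ < ω₃ : S ∩ γ is stationary in γ}. -/

import Mathlib

/-!
Let `A` collect the `γ ∈ S³₁` whose guess `S_γ` is nonstationary in `γ`. At every `γ` where
`S_γ = S ∩ γ`, the ordinal `γ` lies in exactly one of `A` and `Tr(S)`; these `γ` form a stationary
set, which therefore lies inside `A Δ (Tr(S) ∩ S³₁)`, and inside `A` when `S = ∅`.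
The ◊-sequence and `A` live in possibly different universes of ordinals, so guesses are
transported along `Ordinal.lift`, an initial segment that preserves clubs and stationarity.
-/

/-- `C` is a closed unbounded (club) subset of the ordinal `γ`:
it is a set of ordinals below `γ`, unbounded in `γ`, and closed
(contains each of its limit points below `γ`). -/
def IsClubIn (C : Set Ordinal) (γ : Ordinal) : Prop :=
  C ⊆ Set.Iio γ ∧ (∀ β < γ, ∃ α ∈ C, β ≤ α) ∧
    ∀ α < γ, 0 < α → (∀ β < α, ∃ c ∈ C, β < c ∧ c < α) → α ∈ C

/-- `S` is stationary in the ordinal `γ`: it meets every club subset of `γ`. -/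
def IsStatIn (S : Set Ordinal) (γ : Ordinal) : Prop :=
  ∀ C, IsClubIn C γ → (S ∩ C).Nonempty

/-- The order type of a set of ordinals. -/
noncomputable def otp (s : Set Ordinal) : Ordinal :=
  Ordinal.type ((· < ·) : s → s → Prop)

open Ordinal Set

universe u v

theorem isClubIn_Iio (γ : Ordinal) : IsClubIn (Iio γ) γ :=
  ⟨subset_rfl, fun β hβ => ⟨β, hβ, le_rfl⟩, fun _ hα _ _ => hα⟩

theorem not_isStatIn_empty (γ : Ordinal) : ¬ IsStatIn ∅ γ := fun h => by
  simpa using h _ (isClubIn_Iio γ)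

theorem IsStatIn.mono {S T : Set Ordinal} {γ : Ordinal} (hST : S ⊆ T) (h : IsStatIn S γ) :
    IsStatIn T γ :=
  fun C hC => (h C hC).mono (inter_subset_inter_left C hST)

theorem isStatIn_inter_Iio_iff {S : Set Ordinal} {γ : Ordinal} :
    IsStatIn (S ∩ Iio γ) γ ↔ IsStatIn S γ := by
  refine ⟨IsStatIn.mono inter_subset_left, fun h C hC => ?_⟩
  obtain ⟨x, hxS, hxC⟩ := h C hC
  exact ⟨x, ⟨hxS, hC.1 hxC⟩, hxC⟩

theorem IsClubIn.image_lift {C : Set Ordinal.{u}} {γ : Ordinal.{u}} (h : IsClubIn C γ) :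
    IsClubIn (lift.{v} '' C) (lift.{v} γ) := by
  obtain ⟨hsub, hunb, hcl⟩ := h
  refine ⟨?_, fun β hβ => ?_, fun α hα h0 hacc => ?_⟩
  · rintro _ ⟨c, hc, rfl⟩
    exact lift_lt.2 (hsub hc)
  · obtain ⟨β, rfl⟩ := mem_range_lift_of_le hβ.le
    obtain ⟨α, hα, hβα⟩ := hunb β (lift_lt.1 hβ)
    exact ⟨_, mem_image_of_mem _ hα, lift_le.2 hβα⟩
  · obtain ⟨α, rfl⟩ := mem_range_lift_of_le hα.le
    refine mem_image_of_mem _ (hcl α (lift_lt.1 hα) (lift_lt.1 (by rwa [lift_zero])) fun β hβ => ?_)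
    obtain ⟨_, ⟨c, hc, rfl⟩, hβc, hcα⟩ := hacc (lift.{v} β) (lift_lt.2 hβ)
    exact ⟨c, hc, lift_lt.1 hβc, lift_lt.1 hcα⟩

theorem IsClubIn.preimage_lift {C : Set Ordinal.{max u v}} {γ : Ordinal.{u}}
    (h : IsClubIn C (lift.{v} γ)) : IsClubIn (lift.{v} ⁻¹' C) γ := by
  obtain ⟨hsub, hunb, hcl⟩ := h
  refine ⟨fun c hc => lift_lt.1 (hsub hc), fun β hβ => ?_, fun α hα h0 hacc => ?_⟩
  · obtain ⟨α, hα, hβα⟩ := hunb (lift.{v} β) (lift_lt.2 hβ)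
    obtain ⟨α, rfl⟩ := mem_range_lift_of_le (hsub hα).le
    exact ⟨α, hα, lift_le.1 hβα⟩
  · refine hcl _ (lift_lt.2 hα) (by rw [← lift_zero.{u, v}]; exact lift_lt.2 h0) fun β hβ => ?_
    obtain ⟨β, rfl⟩ := mem_range_lift_of_le hβ.le
    obtain ⟨c, hc, hβc, hcα⟩ := hacc β (lift_lt.1 hβ)
    exact ⟨lift.{v} c, hc, lift_lt.2 hβc, lift_lt.2 hcα⟩

theorem isStatIn_preimage_lift_iff {S : Set Ordinal.{max u v}} {γ : Ordinal.{u}} :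
    IsStatIn (lift.{v} ⁻¹' S) γ ↔ IsStatIn S (lift.{v} γ) := by
  refine ⟨fun h C hC => ?_, fun h C hC => ?_⟩
  · obtain ⟨x, hxS, hxC⟩ := h _ hC.preimage_lift
    exact ⟨_, hxS, hxC⟩
  · obtain ⟨_, hS, x, hxC, rfl⟩ := h _ hC.image_lift
    exact ⟨x, hS, hxC⟩

theorem isStatIn_image_lift_iff {S : Set Ordinal.{u}} {γ : Ordinal.{u}} :
    IsStatIn (lift.{v} '' S) (lift.{v} γ) ↔ IsStatIn S γ := by
  rw [← isStatIn_preimage_lift_iff, preimage_image_eq _ fun _ _ => lift_inj.1]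

/-- `S^θ_c` in the paper's notation. -/
def cofSlice (θ : Ordinal.{u}) (c : Cardinal.{u}) : Set Ordinal.{u} :=
  {γ | γ < θ ∧ γ.cof = c}

section Transfer

variable {x : Ordinal.{u}} {y : Ordinal.{v}}

theorem isStatIn_inter_Iio_iff_of_lift_eq (hxy : lift.{v} x = lift.{u} y) (S : Set Ordinal.{v}) :
    IsStatIn (lift.{v} ⁻¹' (lift.{u} '' S) ∩ Iio x) x ↔ IsStatIn (S ∩ Iio y) y := by
  rw [isStatIn_inter_Iio_iff, isStatIn_inter_Iio_iff, isStatIn_preimage_lift_iff, hxy,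
    isStatIn_image_lift_iff]

theorem mem_cofSlice_iff_of_lift_eq {θ : Ordinal.{u}} {θ' : Ordinal.{v}} {c : Cardinal.{u}}
    {c' : Cardinal.{v}} (hθ : lift.{v} θ = lift.{u} θ')
    (hc : Cardinal.lift.{v} c = Cardinal.lift.{u} c') (hxy : lift.{v} x = lift.{u} y) :
    x ∈ cofSlice θ c ↔ y ∈ cofSlice θ' c' := by
  refine and_congr ?_ ?_
  · rw [← lift_lt.{v}, hxy, hθ, lift_lt]
  · calc x.cof = c ↔ Cardinal.lift.{v} x.cof = Cardinal.lift.{v} c := Cardinal.lift_inj.symm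
      _ ↔ Cardinal.lift.{u} y.cof = Cardinal.lift.{u} c' := by rw [lift_cof, hxy, hc, lift_cof]
      _ ↔ y.cof = c' := Cardinal.lift_inj

end Transfer

/-- The paper's `A = {γ ∈ S³₁ : S_γ is nonstationary in γ}`, built in a universe of ordinals
that may differ from the one carrying the guessing sequence `D`. -/
def nonstationaryGuesses (θ : Ordinal.{v}) (c : Cardinal.{v}) (D : Ordinal.{u} → Set Ordinal.{u}) :
    Set Ordinal.{v} :=
  {y ∈ cofSlice θ c | ∀ x : Ordinal.{u}, lift.{v} x = lift.{u} y → ¬ IsStatIn (D x) x}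

section Diamond

variable {θ : Ordinal.{u}} {θ' : Ordinal.{v}} {c : Cardinal.{u}} {c' : Cardinal.{v}}
  {D : Ordinal.{u} → Set Ordinal.{u}}

theorem isStatIn_setOf_mem_nonstationaryGuesses_iff (hθ : lift.{v} θ = lift.{u} θ')
    (hc : Cardinal.lift.{v} c = Cardinal.lift.{u} c')
    (hD : ∀ S, IsStatIn {x | x < θ ∧ x.cof = c ∧ S ∩ Iio x = D x} θ) (S : Set Ordinal.{v}) :
    IsStatIn {y ∈ cofSlice θ' c' |
      y ∈ nonstationaryGuesses θ' c' D ↔ ¬ IsStatIn (S ∩ Iio y) y} θ' := by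
  have hguess := isStatIn_image_lift_iff.{u, v}.2 (hD (lift.{v} ⁻¹' (lift.{u} '' S)))
  rw [hθ, ← isStatIn_preimage_lift_iff] at hguess
  refine hguess.mono ?_
  rintro y ⟨x, ⟨hxθ, hxc, hSD⟩, hxy⟩
  have hy := (mem_cofSlice_iff_of_lift_eq hθ hc hxy).1 ⟨hxθ, hxc⟩
  refine ⟨hy, ?_⟩
  rw [← isStatIn_inter_Iio_iff_of_lift_eq hxy, hSD]
  simp only [nonstationaryGuesses, mem_ofPred_eq, hy, true_and]
  exact ⟨fun hA => hA x hxy, fun hx x' hx'y => by rwa [lift_inj.1 (hx'y.trans hxy.symm)]⟩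

theorem isStatIn_nonstationaryGuesses (hθ : lift.{v} θ = lift.{u} θ')
    (hc : Cardinal.lift.{v} c = Cardinal.lift.{u} c')
    (hD : ∀ S, IsStatIn {x | x < θ ∧ x.cof = c ∧ S ∩ Iio x = D x} θ) :
    IsStatIn (nonstationaryGuesses θ' c' D) θ' :=
  (isStatIn_setOf_mem_nonstationaryGuesses_iff hθ hc hD ∅).mono fun y hy =>
    hy.2.2 (by simpa using not_isStatIn_empty y)

theorem isStatIn_symmDiff_nonstationaryGuesses (hθ : lift.{v} θ = lift.{u} θ')
    (hc : Cardinal.lift.{v} c = Cardinal.lift.{u} c')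
    (hD : ∀ S, IsStatIn {x | x < θ ∧ x.cof = c ∧ S ∩ Iio x = D x} θ) (S : Set Ordinal.{v}) :
    IsStatIn (symmDiff (nonstationaryGuesses θ' c' D)
      ({y | y < θ' ∧ IsStatIn (S ∩ Iio y) y} ∩ cofSlice θ' c')) θ' := by
  refine (isStatIn_setOf_mem_nonstationaryGuesses_iff hθ hc hD S).mono ?_
  rintro y ⟨hy, hA⟩
  by_cases hS : IsStatIn (S ∩ Iio y) y
  · exact Or.inr ⟨⟨⟨hy.1, hS⟩, hy⟩, fun h => hA.1 h hS⟩
  · exact Or.inl ⟨hA.2 hS, fun h => hS h.1.2⟩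

end Diamond

theorem stmt5_general
    (D : Ordinal → Set Ordinal)
    (hdiamond : ∀ S : Set Ordinal,
      IsStatIn {γ | γ < (Cardinal.aleph 3).ord ∧ Ordinal.cof γ = Cardinal.aleph 1 ∧
        S ∩ Set.Iio γ = D γ} (Cardinal.aleph 3).ord) :
    ∃ A : Set Ordinal,
      A ⊆ {γ | γ < (Cardinal.aleph 3).ord ∧ Ordinal.cof γ = Cardinal.aleph 1} ∧
      IsStatIn A (Cardinal.aleph 3).ord ∧
      ∀ S : Set Ordinal,
        S ⊆ {α | α < (Cardinal.aleph 3).ord ∧ Ordinal.cof α = Cardinal.aleph0} →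
        IsStatIn (symmDiff A
          ({γ | γ < (Cardinal.aleph 3).ord ∧ IsStatIn (S ∩ Set.Iio γ) γ} ∩
            {γ | γ < (Cardinal.aleph 3).ord ∧ Ordinal.cof γ = Cardinal.aleph 1}))
          (Cardinal.aleph 3).ord := by
  refine ⟨nonstationaryGuesses _ _ D, fun _ hy => hy.1,
    isStatIn_nonstationaryGuesses ?hθ ?hc hdiamond,
    fun S _ => isStatIn_symmDiff_nonstationaryGuesses ?hθ ?hc hdiamond S⟩
  · simp only [Cardinal.lift_ord, Cardinal.lift_aleph, lift_ofNat]
  · simp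

/-- Given a `◊`-sequence on `S³₁ = {γ < ω₃ : cf γ = ω₁}`, there is a
stationary `A ⊆ S³₁` such that for every `S ⊆ S³₀`, the symmetric difference
`A Δ (Tr(S) ∩ S³₁)` is stationary, where `Tr(S) = {γ < ω₃ : S ∩ γ stationary in γ}`. -/
theorem stmt5
    (D : Ordinal → Set Ordinal)
    (hDsub : ∀ γ, D γ ⊆ Set.Iio γ)
    (hdiamond : ∀ S : Set Ordinal,
      IsStatIn {γ | γ < (Cardinal.aleph 3).ord ∧ Ordinal.cof γ = Cardinal.aleph 1 ∧
        S ∩ Set.Iio γ = D γ} (Cardinal.aleph 3).ord) :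
    ∃ A : Set Ordinal,
      A ⊆ {γ | γ < (Cardinal.aleph 3).ord ∧ Ordinal.cof γ = Cardinal.aleph 1} ∧
      IsStatIn A (Cardinal.aleph 3).ord ∧
      ∀ S : Set Ordinal,
        S ⊆ {α | α < (Cardinal.aleph 3).ord ∧ Ordinal.cof α = Cardinal.aleph0} →
        IsStatIn (symmDiff A
          ({γ | γ < (Cardinal.aleph 3).ord ∧ IsStatIn (S ∩ Set.Iio γ) γ} ∩
            {γ | γ < (Cardinal.aleph 3).ord ∧ Ordinal.cof γ = Cardinal.aleph 1}))
          (Cardinal.aleph 3).ord :=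
  stmt5_general D hdiamond
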